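/- arXiv:math/0405560 — 3 statements merged into one kernel-verified Lean document; each statement's English description precedes it below -/
import Mathlib

section
/- Let G be a torsion-free abelian group (written multiplicatively) and A = (x_1, ..., x_q) a q-tuple of elements of G with 1 < s < r ≤ q. Say A has property P_{r,s} if for any r indices p_1, ..., p_r and any subset I ⊂ {p_1,...,p_r} with #I = s, there exists a subset J ⊂ {p_1,...,p_r} with J ≠ I and #J = s such that ∏_{i∈I} x_i = ∏_{j∈J} x_j. If A has property P_{r,s}, then there exist q - r + 2 indices i_1, ..., i_{q-r+2} in {1,...,q} such that x_{i_1} = ... = x_{i_{q-r+2}}. -/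
/-!
The entries of the tuple generate a finitely generated torsion-free abelian group, which embeds
into `ℤᵈ` with its lexicographic order; so we may assume that `G` is linearly ordered and that
`x₀ ≤ ⋯ ≤ x_{q-1}`. Put `m = r - s`. For `m - 1 < j ≤ q - s`, apply `P_{r,s}` to the `r` indices
`{0, …, m - 1} ∪ {j} ∪ {q - s + 1, …, q - 1}` and to `I = {j, q - s + 1, …, q - 1}`: the `t > 0`
elements of `I \ J` are all `≥ x_j`, the `t` elements of `J \ I` are all `≤ x_{m-1}`, and the two
products agree, so `x_j ≤ x_{m-1}`. Hence `x_{m-1} = ⋯ = x_{q-s}`, which are `q - r + 2` entries.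
-/

open Finset Function

section

variable {ι κ M N : Type*} {r s : ℕ}

/-- Fujimoto's property `P_{r,s}`. -/
def PropertyP [CommMonoid M] (r s : ℕ) (x : ι → M) : Prop :=
  ∀ P : Finset ι, #P = r → ∀ I ⊆ P, #I = s →
    ∃ J ⊆ P, J ≠ I ∧ #J = s ∧ ∏ i ∈ I, x i = ∏ j ∈ J, x j

section CommMonoid

variable [CommMonoid M] [CommMonoid N]

theorem propertyP_comp_iff {f : M →* N} (hf : Injective f) {x : ι → M} :
    PropertyP r s (f ∘ x) ↔ PropertyP r s x := by
  simp only [PropertyP, comp_apply, ← map_prod, hf.eq_iff]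

theorem PropertyP.comp_equiv {x : ι → M} (hx : PropertyP r s x) (e : κ ≃ ι) :
    PropertyP r s (x ∘ e) := by
  intro P hP I hIP hI
  obtain ⟨J, hJP, hJI, hJ, hprod⟩ :=
    hx (P.map e.toEmbedding) (by simpa) (I.map e.toEmbedding) (map_subset_map.2 hIP) (by simpa)
  refine ⟨J.map e.symm.toEmbedding, ?_, ?_, by simpa, ?_⟩
  · simpa [← map_subset_map (f := e.toEmbedding), map_map] using hJP
  · rintro rfl
    simp [map_map] at hJI
  · simpa [prod_map] using hprod

end CommMonoid

section LinearOrder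

variable [CancelCommMonoid M] [LinearOrder M] [IsOrderedCancelMonoid M]

theorem le_of_prod_eq_prod_of_card_eq [DecidableEq ι] {x : ι → M} {I J : Finset ι} {a c : M}
    (hIJ : I ≠ J) (hcard : #I = #J) (hprod : ∏ i ∈ I, x i = ∏ j ∈ J, x j)
    (hI : ∀ i ∈ I \ J, c ≤ x i) (hJ : ∀ j ∈ J \ I, x j ≤ a) : c ≤ a := by
  have hsdiff : ∏ i ∈ I \ J, x i = ∏ j ∈ J \ I, x j := prod_sdiff_eq_prod_sdiff_iff.2 hprod
  have hcard' : #(J \ I) = #(I \ J) := card_sdiff_comm hcard.symm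
  have ht : #(I \ J) ≠ 0 := by
    rw [Ne, card_eq_zero, sdiff_eq_empty_iff_subset]
    exact fun h => hIJ (eq_of_subset_of_card_le h hcard.ge)
  refine (pow_le_pow_iff_left ht).1 ?_
  calc c ^ #(I \ J) ≤ ∏ i ∈ I \ J, x i := pow_card_le_prod _ _ _ hI
    _ = ∏ j ∈ J \ I, x j := hsdiff
    _ ≤ a ^ #(I \ J) := hcard' ▸ prod_le_pow_card _ _ _ hJ

theorem PropertyP.eq_of_between_blocks {x : ι → M} (hx : PropertyP r s x) (hs : 0 < s)
    (hsr : s ≤ r) {B T : Finset ι} {b j : ι} (hB : #B = r - s) (hT : #T = s - 1)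
    (hBT : Disjoint B T) (hjB : j ∉ B) (hjT : j ∉ T) (hBb : ∀ i ∈ B, x i ≤ x b)
    (hbj : x b ≤ x j) (hTj : ∀ t ∈ T, x j ≤ x t) : x j = x b := by
  classical
  have hjBT : j ∉ B ∪ T := by simp [hjB, hjT]
  obtain ⟨J, hJP, hJI, hJ, hprod⟩ := hx (insert j (B ∪ T))
    (by rw [card_insert_of_notMem hjBT, card_union_of_disjoint hBT]; omega)
    (insert j T) (insert_subset_insert _ subset_union_right)
    (by rw [card_insert_of_notMem hjT]; omega)
  refine le_antisymm (le_of_prod_eq_prod_of_card_eq hJI.symm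
    (by rw [hJ, card_insert_of_notMem hjT]; omega) hprod ?_ ?_) hbj
  · intro i hi
    obtain rfl | hiT := mem_insert.1 (mem_sdiff.1 hi).1
    exacts [le_rfl, hTj i hiT]
  · intro i hi
    obtain ⟨hiJ, hiI⟩ := mem_sdiff.1 hi
    have hiB : i ∈ B := by
      have hiP := hJP hiJ
      simp only [mem_insert, mem_union] at hiP hiI
      tauto
    exact hBb i hiB

theorem PropertyP.exists_card_eq_of_monotone {q : ℕ} {x : Fin q → M} (hx : PropertyP r s x)
    (hmono : Monotone x) (hs : 0 < s) (hsr : s < r) (hrq : r ≤ q) :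
    ∃ T : Finset (Fin q), #T = q - r + 2 ∧ ∀ i ∈ T, ∀ j ∈ T, x i = x j := by
  let b : Fin q := ⟨r - s - 1, by omega⟩
  let c : Fin q := ⟨q - s, by omega⟩
  have hconst : ∀ j ∈ Icc b c, x j = x b := by
    intro j hj
    obtain ⟨hbj, hjc⟩ := mem_Icc.1 hj
    obtain rfl | hbj := hbj.eq_or_lt
    · rfl
    refine hx.eq_of_between_blocks hs hsr.le (B := Iic b) (T := Ioi c) ?_ ?_ ?_ ?_ ?_
      (fun i hi => hmono (mem_Iic.1 hi)) (hmono hbj.le)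
      (fun t ht => hmono (hjc.trans (mem_Ioi.1 ht).le))
    · simp [b]; omega
    · simp [c]; omega
    · exact disjoint_left.2 fun i hib hci =>
        (mem_Iic.1 hib).not_gt ((hbj.trans_le hjc).trans (mem_Ioi.1 hci))
    · simpa using hbj
    · simpa using hjc
  exact ⟨Icc b c, by simp [b, c]; omega,
    fun i hi j hj => (hconst i hi).trans (hconst j hj).symm⟩

theorem PropertyP.exists_card_eq_of_linearOrder [Fintype ι] {x : ι → M} (hx : PropertyP r s x)
    (hs : 0 < s) (hsr : s < r) (hrq : r ≤ Fintype.card ι) :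
    ∃ T : Finset ι, #T = Fintype.card ι - r + 2 ∧ ∀ i ∈ T, ∀ j ∈ T, x i = x j := by
  let e : Fin (Fintype.card ι) ≃ ι :=
    (Tuple.sort (x ∘ (Fintype.equivFin ι).symm)).trans (Fintype.equivFin ι).symm
  obtain ⟨T, hT, hTx⟩ := (hx.comp_equiv e).exists_card_eq_of_monotone
    (Tuple.monotone_sort (x ∘ (Fintype.equivFin ι).symm)) hs hsr hrq
  refine ⟨T.map e.toEmbedding, by simpa, ?_⟩
  simp only [mem_map, Equiv.coe_toEmbedding, forall_exists_index, and_imp,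
    forall_apply_eq_imp_iff₂]
  exact hTx

end LinearOrder

theorem AffineMonoid.exists_injective_monoidHom_lex [CancelCommMonoid M] [Monoid.FG M]
    [IsMulTorsionFree M] :
    ∃ d : ℕ, ∃ f : M →* Multiplicative (Lex (Fin d → ℤ)), Injective f := by
  let e : FreeAbelianGroup (Fin (AffineAddMonoid.dim (Additive M))) ≃+ Lex (Fin _ → ℤ) :=
    (FreeAbelianGroup.equivFinsupp _).trans
      ((Finsupp.linearEquivFunOnFinite ℤ ℤ _).toAddEquiv.trans (toLexAddEquiv _))
  exact ⟨_, AddMonoidHom.toMultiplicativeRight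
    (e.toAddMonoidHom.comp (AffineAddMonoid.embedding _)),
    e.injective.comp (AffineAddMonoid.embedding_injective (M := Additive M))⟩

theorem PropertyP.exists_card_eq {G : Type*} [CommGroup G] [IsMulTorsionFree G] [Fintype ι]
    {x : ι → G} (hx : PropertyP r s x) (hs : 0 < s) (hsr : s < r) (hrq : r ≤ Fintype.card ι) :
    ∃ T : Finset ι, #T = Fintype.card ι - r + 2 ∧ ∀ i ∈ T, ∀ j ∈ T, x i = x j := by
  let H := Subgroup.closure (Set.range x)
  obtain ⟨d, f, hf⟩ := AffineMonoid.exists_injective_monoidHom_lex (M := H)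
  let y : ι → H := fun i => ⟨x i, Subgroup.subset_closure ⟨i, rfl⟩⟩
  have hy : PropertyP r s (f ∘ y) :=
    (propertyP_comp_iff hf).2 ((propertyP_comp_iff Subtype.val_injective (f := H.subtype)).1 hx)
  obtain ⟨T, hT, hTy⟩ := hy.exists_card_eq_of_linearOrder hs hsr hrq
  exact ⟨T, hT, fun i hi j hj => congrArg Subtype.val (hf (hTy i hi j hj))⟩

end

/-- Fujimoto's combinatorial lemma: if a `q`-tuple in a torsion-free abelian
group has property `P_{r,s}`, then some `q - r + 2` of its entries are equal. -/
theorem stmt_0 {G : Type*} [CommGroup G]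
    (hG : ∀ g : G, ∀ k : ℕ, 1 ≤ k → g ^ k = 1 → g = 1)
    (q r s : ℕ) (hs : 1 < s) (hsr : s < r) (hrq : r ≤ q)
    (x : Fin q → G)
    (hP : ∀ P : Finset (Fin q), P.card = r →
      ∀ I ⊆ P, I.card = s →
        ∃ J ⊆ P, J ≠ I ∧ J.card = s ∧ (∏ i ∈ I, x i) = ∏ j ∈ J, x j) :
    ∃ T : Finset (Fin q), T.card = q - r + 2 ∧ ∀ i ∈ T, ∀ j ∈ T, x i = x j := by
  have : IsMulTorsionFree G := .of_not_isOfFinOrder fun g hg hfin =>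
    let ⟨k, hk, hgk⟩ := hfin.exists_pow_eq_one
    hg (hG g k hk hgk)
  simpa using PropertyP.exists_card_eq hP (by omega) hsr (by simpa using hrq)
end

section
/- (Laplace expansion identity for the degeneracy determinant) Let K be a field, and for j = 1, ..., 2n+2 let a_j = (a_{j0}, ..., a_{jn}) ∈ K^{n+1} and h_j ∈ K. Consider the (2n+2)×(2n+2) matrix whose j-th row is (a_{j0}, ..., a_{jn}, h_j·a_{j0}, ..., h_j·a_{jn}). Then its determinant equals the sum over all subsets I = {i_0 < ... < i_n} ⊆ {1, ..., 2n+2} of size n+1 of (-1)^{n(n+1)/2 + i_0 + ... + i_n} · det(a_{i_r, j})_{0≤r,j≤n} · det(a_{i'_s, j})_{0≤s,j≤n} · ∏_{i∈I} h_i, where {i'_0 < ... < i'_n} is the complement of I in {1, ..., 2n+2}. -/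
/-!
Write row `j` as `(a_j, 0) + h_j • (0, a_j)`. Multilinearity of the determinant in the rows
expands it as `∑_S (∏_{i ∈ S} h_i) det W_S`, where `W_S` has row `(0, a_j)` for `j ∈ S` and
`(a_j, 0)` otherwise. In the Leibniz expansion of `W_S` every nonzero term maps the last `n + 1`
columns onto `S`, so `W_S` is singular unless `#S = n + 1`; in that case listing the rows of `Sᶜ`
before those of `S` makes it block diagonal. That shuffle has one inversion for each pair
`i < j` with `i ∈ S`, `j ∉ S`; since exactly `2n + 1 - i` indices lie above `i`, the number of
such pairs has the parity of `n(n+1)/2 + ∑_{i ∈ S} (i + 1)`.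
-/

open Finset Equiv Matrix

namespace Matrix

variable {R : Type*} [CommRing R] {ι κ : Type*} [DecidableEq ι]

theorem det_of_smul_add [Fintype ι] (u v : ι → ι → R) (h : ι → R) :
    det (of fun j => h j • v j + u j) =
      ∑ S : Finset ι, (∏ i ∈ S, h i) * det (of (S.piecewise v u)) := by
  change detRowAlternating.toMultilinearMap ((fun j => h j • v j) + u) = _
  rw [MultilinearMap.map_add_univ]
  refine sum_congr rfl fun S _ => ?_
  have hpiece : S.piecewise (fun j => h j • v j) u =
      fun j => (if j ∈ S then h j else 1) • S.piecewise v u j := by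
    ext j
    by_cases hj : j ∈ S <;> simp [hj]
  rw [hpiece, MultilinearMap.map_smul_univ, prod_ite_mem, univ_inter, smul_eq_mul]
  rfl

/-- Row `j` is `(0, a j)` for `j ∈ S` and `(a j, 0)` otherwise, the columns being split by `e`. -/
def blockRows (e : ι ≃ κ ⊕ κ) (a : ι → κ → R) (S : Finset ι) : Matrix ι ι R :=
  of (S.piecewise (fun j c => Sum.elim 0 (a j) (e c)) fun j c => Sum.elim (a j) 0 (e c))

theorem det_of_sum_elim_smul [Fintype ι] (e : ι ≃ κ ⊕ κ) (a : ι → κ → R) (h : ι → R) :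
    det (of fun j c => Sum.elim (a j) (h j • a j) (e c)) =
      ∑ S : Finset ι, (∏ i ∈ S, h i) * det (blockRows e a S) := by
  refine (congrArg det ?_).trans (det_of_smul_add (fun j c => Sum.elim (a j) 0 (e c))
    (fun j c => Sum.elim 0 (a j) (e c)) h)
  ext j c
  rcases hc : e c with k | k <;> simp [hc]

theorem det_blockRows_eq_zero [Fintype ι] [Fintype κ] (e : ι ≃ κ ⊕ κ) (a : ι → κ → R)
    {S : Finset ι} (hS : #S ≠ Fintype.card κ) : det (blockRows e a S) = 0 := by
  rw [det_apply]
  refine sum_eq_zero fun τ _ => ?_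
  by_cases hentry : ∃ c, blockRows e a S (τ c) c = 0
  · obtain ⟨c, hc⟩ := hentry
    rw [prod_eq_zero (f := fun i => blockRows e a S (τ i) i) (mem_univ c) hc, smul_zero]
  push Not at hentry
  have hmem (c : ι) : τ c ∈ S ↔ ∃ k, e c = .inr k := by
    have := hentry c
    rcases hc : e c with k | k <;> by_cases hcS : τ c ∈ S <;> simp_all [blockRows]
  have hS_eq : S = univ.image fun k => τ (e.symm (.inr k)) := by
    ext y
    simp only [mem_image, mem_univ, true_and]
    constructor
    · intro hy
      obtain ⟨k, hk⟩ := (hmem (τ.symm y)).mp (by simpa using hy)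
      exact ⟨k, by rw [← hk]; simp⟩
    · rintro ⟨k, rfl⟩
      exact (hmem _).mpr ⟨k, by simp⟩
  refine absurd ?_ hS
  rw [hS_eq, card_image_of_injective _ fun k l hkl => by simpa using hkl, card_univ]

theorem det_blockRows [Fintype ι] [Fintype κ] [DecidableEq κ] (e : ι ≃ κ ⊕ κ)
    (a : ι → κ → R) {S : Finset ι} (σ : κ ⊕ κ ≃ ι) (hl : ∀ k, σ (.inl k) ∉ S)
    (hr : ∀ k, σ (.inr k) ∈ S) :
    det (blockRows e a S) = Perm.sign (e.trans σ) *
      (det (of fun k => a (σ (.inl k))) * det (of fun k => a (σ (.inr k)))) := by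
  have hsub : (blockRows e a S).submatrix (e.trans σ) id =
      (fromBlocks (of fun k => a (σ (.inl k))) 0 0 (of fun k => a (σ (.inr k)))).submatrix
        e e := by
    ext j c
    rcases hj : e j with k | k <;> rcases hc : e c with l | l <;>
      simp [blockRows, Finset.piecewise, hj, hc, hl, hr]
  have hperm := det_permute (e.trans σ) (blockRows e a S)
  rw [hsub, det_submatrix_equiv_self, det_fromBlocks_zero₁₂] at hperm
  rw [hperm, ← mul_assoc, ← Int.cast_mul, ← Units.val_mul, Int.units_mul_self, Units.val_one,
    Int.cast_one, one_mul]

end Matrix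

namespace Equiv.Perm

theorem sign_eq_signAux {m : ℕ} (σ : Perm (Fin m)) : sign σ = signAux σ := by
  induction σ using swap_induction_on with
  | one => simp
  | swap_mul f x y hxy ih => rw [sign_mul, signAux_mul, sign_swap hxy, signAux_swap hxy, ih]

/-- The hypothesis says that `π` lists `Sᶜ` increasingly and then `S` increasingly. -/
theorem sign_eq_neg_one_pow_of_strictMono_lex {m : ℕ} (S : Finset (Fin m)) (π : Perm (Fin m))
    (hπ : StrictMono ((fun x => toLex (decide (x ∈ S), x)) ∘ π)) :
    sign π = (-1) ^ #{p ∈ S ×ˢ Sᶜ | p.1 < p.2} := by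
  have inversion_mem {i j} (hji : j < i) (hπij : π i ≤ π j) : π i ∈ S ∧ π j ∉ S := by
    have := hπ hji
    simp only [Function.comp_apply, Prod.Lex.toLex_lt_toLex] at this
    by_cases hi : π i ∈ S <;> by_cases hj : π j ∈ S <;> simp_all [not_lt_of_ge]
  rw [sign_eq_signAux, signAux, prod_ite, prod_const, prod_const_one, mul_one]
  congr 1
  refine card_nbij' (fun x => (π x.1, π x.2)) (fun p => ⟨π.symm p.1, π.symm p.2⟩) ?_ ?_ ?_ ?_
  · rintro ⟨i, j⟩ hij
    simp only [coe_filter, mem_finPairsLT, Set.mem_ofPred_eq] at hij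
    simp only [coe_filter, mem_product, mem_compl, Set.mem_ofPred_eq]
    exact ⟨inversion_mem hij.1 hij.2, hij.2.lt_of_ne (π.injective.ne hij.1.ne')⟩
  · rintro ⟨x, y⟩ hxy
    simp only [coe_filter, mem_product, mem_compl, Set.mem_ofPred_eq] at hxy
    simp only [coe_filter, mem_finPairsLT, Set.mem_ofPred_eq, apply_symm_apply]
    refine ⟨hπ.lt_iff_lt.mp ?_, hxy.2.le⟩
    simp [Prod.Lex.toLex_lt_toLex, hxy.1.1, hxy.1.2]
  · rintro ⟨i, j⟩ -
    simp
  · rintro ⟨x, y⟩ -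
    simp

end Equiv.Perm

namespace Finset

theorem card_filter_product_lt {α : Type*} [LinearOrder α] (S T : Finset α) :
    #{p ∈ S ×ˢ T | p.1 < p.2} = ∑ y ∈ S, #{x ∈ T | y < x} := by
  simp only [card_filter, sum_product]

theorem card_filter_compl_lt_add_card_filter_lt {m : ℕ} (S : Finset (Fin m)) (y : Fin m) :
    #{x ∈ Sᶜ | y < x} + #{x ∈ S | y < x} + ((y : ℕ) + 1) = m := by
  rw [add_comm #{x ∈ Sᶜ | y < x}, card_filter, card_filter, sum_add_sum_compl, ← card_filter,
    filter_lt_eq_Ioi, Fin.card_Ioi]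
  omega

theorem card_filter_product_compl_lt_add {m : ℕ} (S : Finset (Fin m)) :
    #{p ∈ S ×ˢ Sᶜ | p.1 < p.2} + (#S).choose 2 + ∑ i ∈ S, ((i : ℕ) + 1) = #S * m := by
  rw [← card_product_filter_lt, card_filter_product_lt, card_filter_product_lt,
    ← sum_add_distrib, ← sum_add_distrib, sum_congr rfl fun y _ =>
      card_filter_compl_lt_add_card_filter_lt S y, sum_const, smul_eq_mul]

theorem neg_one_pow_card_filter_product_compl_lt {M : Type*} [Monoid M] [HasDistribNeg M]
    {n : ℕ} {S : Finset (Fin (2 * n + 2))} (hS : #S = n + 1) :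
    (-1 : M) ^ #{p ∈ S ×ˢ Sᶜ | p.1 < p.2} = (-1) ^ (n * (n + 1) / 2 + ∑ i ∈ S, ((i : ℕ) + 1)) := by
  have hcount := card_filter_product_compl_lt_add S
  rw [hS, Nat.choose_two_right, Nat.add_sub_cancel, Nat.mul_comm (n + 1) n] at hcount
  have : (n + 1) * (2 * n + 2) = 2 * ((n + 1) * (n + 1)) := by ring
  refine neg_one_pow_congr ?_
  simp only [Nat.even_iff]
  omega

end Finset

theorem strictMono_toLex_mem_finSumEquivOfFinset {α : Type*} [Fintype α] [DecidableEq α]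
    [LinearOrder α] {p q : ℕ} {S : Finset α} (hS : #S = q) (hSc : #Sᶜ = p) :
    StrictMono ((fun x => toLex (decide (x ∈ S), x)) ∘
      finSumFinEquiv.symm.trans ((sumComm _ _).trans (finSumEquivOfFinset hS hSc))) := by
  have hl (i : Fin p) : Sᶜ.orderEmbOfFin hSc i ∉ S := mem_compl.mp (orderEmbOfFin_mem _ _ i)
  have hr (j : Fin q) : S.orderEmbOfFin hS j ∈ S := orderEmbOfFin_mem _ _ j
  intro i j hij
  induction i using Fin.addCases with
  | left i => induction j using Fin.addCases with
    | left j =>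
      simpa [Prod.Lex.toLex_lt_toLex, hl] using (Fin.strictMono_castAdd q).lt_iff_lt.mp hij
    | right j => simp [Prod.Lex.toLex_lt_toLex, hl]
  | right i => induction j using Fin.addCases with
    | left j => simp [Fin.lt_def] at hij; omega
    | right j =>
      simpa [Prod.Lex.toLex_lt_toLex, hr] using (Fin.natAdd_lt_natAdd_iff p).mp hij

def finHalves (n : ℕ) : Fin (2 * n + 2) ≃ Fin (n + 1) ⊕ Fin (n + 1) :=
  (finCongr (by omega)).trans finSumFinEquiv.symm

theorem finHalves_apply {n : ℕ} (c : Fin (2 * n + 2)) :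
    finHalves n c = if hc : (c : ℕ) < n + 1 then .inl ⟨c, hc⟩
      else .inr ⟨c - (n + 1), by omega⟩ := by
  have hcongr : 2 * n + 2 = (n + 1) + (n + 1) := by omega
  split_ifs with hc
  · have : finCongr hcongr c = Fin.castAdd (n + 1) ⟨c, hc⟩ := Fin.ext rfl
    rw [finHalves, trans_apply, this, finSumFinEquiv_symm_apply_castAdd]
  · have : finCongr hcongr c = Fin.natAdd (n + 1) ⟨c - (n + 1), by omega⟩ :=
      Fin.ext (by simp only [finCongr_apply, Fin.val_cast, Fin.val_natAdd]; omega)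
    rw [finHalves, trans_apply, this, finSumFinEquiv_symm_apply_natAdd]

theorem det_blockRows_finHalves {R : Type*} [CommRing R] {n : ℕ}
    (a : Fin (2 * n + 2) → Fin (n + 1) → R) {S : Finset (Fin (2 * n + 2))} (hS : #S = n + 1)
    (hSc : #Sᶜ = n + 1) :
    det (blockRows (finHalves n) a S) = (-1) ^ (n * (n + 1) / 2 + ∑ i ∈ S, ((i : ℕ) + 1)) *
      det (of fun r => a (S.orderIsoOfFin hS r)) *
      det (of fun r => a (Sᶜ.orderIsoOfFin hSc r)) := by
  set σ := (sumComm _ _).trans (finSumEquivOfFinset hS hSc)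
  have hsign : Perm.sign ((finHalves n).trans σ) =
      (-1) ^ (n * (n + 1) / 2 + ∑ i ∈ S, ((i : ℕ) + 1)) := by
    rw [Perm.sign_eq_neg_one_pow_of_strictMono_lex S ((finHalves n).trans σ)
      ((strictMono_toLex_mem_finSumEquivOfFinset hS hSc).comp fun _ _ h => h),
      neg_one_pow_card_filter_product_compl_lt hS]
  rw [det_blockRows (finHalves n) a σ (fun k => mem_compl.mp (orderEmbOfFin_mem Sᶜ hSc k))
    (fun k => orderEmbOfFin_mem S hS k), hsign]
  simp [σ, coe_orderIsoOfFin_apply]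
  ring

/-- Laplace expansion of the determinant of the `(2n+2) × (2n+2)` matrix with
rows `(a_{j0}, …, a_{jn}, h_j a_{j0}, …, h_j a_{jn})` along the first `n+1`
columns. -/
theorem stmt_7 {K : Type*} [CommRing K] (n : ℕ)
    (a : Fin (2 * n + 2) → Fin (n + 1) → K) (h : Fin (2 * n + 2) → K) :
    (Matrix.of fun (j c : Fin (2 * n + 2)) =>
        if hc : (c : ℕ) < n + 1 then a j ⟨(c : ℕ), hc⟩
        else h j * a j ⟨(c : ℕ) - (n + 1), by have := c.isLt; omega⟩).det =
      ∑ I : {s : Finset (Fin (2 * n + 2)) // s.card = n + 1},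
        (-1 : K) ^ (n * (n + 1) / 2 + ∑ i ∈ I.1, ((i : ℕ) + 1)) *
          (Matrix.of fun (r c : Fin (n + 1)) =>
            a (I.1.orderIsoOfFin I.2 r) c).det *
          (Matrix.of fun (s c : Fin (n + 1)) =>
            a ((I.1ᶜ).orderIsoOfFin
              (by simp [Finset.card_compl, I.2]; omega) s) c).det *
          ∏ i ∈ I.1, h i := by
  calc _ = det (of fun j c => Sum.elim (a j) (h j • a j) (finHalves n c)) := by
        congr
        ext j c
        rw [finHalves_apply]
        split_ifs <;> rfl
    _ = _ := by
      rw [det_of_sum_elim_smul,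
        ← Fintype.sum_subtype_add_sum_subtype fun S : Finset (Fin (2 * n + 2)) => #S = n + 1,
        add_eq_left.mpr (Fintype.sum_eq_zero _ fun S => by
          rw [det_blockRows_eq_zero _ _ (by simpa using S.2), mul_zero])]
      refine Fintype.sum_congr _ _ fun S => ?_
      rw [det_blockRows_finHalves a S.2 (by rw [card_compl, S.2, Fintype.card_fin]; omega)]
      ring
end

section
/- Let G be a torsion-free abelian group and x_1, ..., x_{2n+2} ∈ G such that for every subset I ⊆ {1,...,2n+2} with #I = n+1 there exists J ≠ I, #J = n+1, with ∏_{i∈I} x_i = ∏_{j∈J} x_j (this is property P_{2n+2,n+1}). Then there exist two distinct indices j_1 ≠ j_2 with x_{j_1} = x_{j_2}. -/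
/-!
Embed the subgroup generated by the `x i` into a lexicographically ordered `ℤᵏ`; this is
possible because a finitely generated torsion-free abelian group is free. In a linearly ordered
group take an `(n+1)`-subset `I` of maximal product and a different subset `J` with the same
product, so `J` is maximal too. Exchanging one element between a maximal subset and its
complement cannot increase the product, so for `i ∈ I \ J` and `j ∈ J \ I` both `x j ≤ x i`
and `x i ≤ x j` hold.
-/

open Finset Function

section

variable {ι G H : Type*}

/-- Property `P_{q,s}` of Fujimoto, with `q` the cardinality of the index type. -/
def HasRepeatedSubsetProds [CommMonoid G] (s : ℕ) (x : ι → G) : Prop :=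
  ∀ I : Finset ι, I.card = s →
    ∃ J : Finset ι, J ≠ I ∧ J.card = s ∧ ∏ i ∈ I, x i = ∏ j ∈ J, x j

theorem hasRepeatedSubsetProds_comp_iff [CommMonoid G] [CommMonoid H] {f : G →* H}
    (hf : Injective f) {s : ℕ} {x : ι → G} :
    HasRepeatedSubsetProds s (f ∘ x) ↔ HasRepeatedSubsetProds s x := by
  simp only [HasRepeatedSubsetProds, comp_apply, ← map_prod, hf.eq_iff]

theorem Finset.le_of_forall_card_eq_prod_le [DecidableEq ι] [CommMonoid G] [PartialOrder G]
    [IsOrderedCancelMonoid G] {y : ι → G} {K : Finset ι}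
    (hK : ∀ L : Finset ι, L.card = K.card → ∏ i ∈ L, y i ≤ ∏ i ∈ K, y i)
    {a b : ι} (ha : a ∈ K) (hb : b ∉ K) : y b ≤ y a := by
  have hb' : b ∉ K.erase a := fun h => hb (mem_of_mem_erase h)
  have hcard : (insert b (K.erase a)).card = K.card := by
    rw [card_insert_of_notMem hb', card_erase_add_one ha]
  have := hK _ hcard
  rw [prod_insert hb', ← mul_prod_erase K y ha] at this
  exact le_of_mul_le_mul_right' this

theorem HasRepeatedSubsetProds.exists_ne_eq [Fintype ι] [CommMonoid G] [LinearOrder G]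
    [IsOrderedCancelMonoid G] {s : ℕ} {y : ι → G} (hy : HasRepeatedSubsetProds s y)
    (hs : s ≤ Fintype.card ι) : ∃ i j, i ≠ j ∧ y i = y j := by
  classical
  obtain ⟨I, hI, hImax⟩ := exists_max_image (univ.powersetCard s) (fun K => ∏ i ∈ K, y i)
    (powersetCard_nonempty.2 (by simpa using hs))
  have hIs : I.card = s := (mem_powersetCard.1 hI).2
  have hmax (L : Finset ι) (hL : L.card = s) : ∏ i ∈ L, y i ≤ ∏ i ∈ I, y i :=
    hImax L (mem_powersetCard.2 ⟨subset_univ L, hL⟩)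
  obtain ⟨J, hJI, hJs, hIJ⟩ := hy I hIs
  obtain ⟨i, hiI, hiJ⟩ := not_subset.1 fun h => hJI (eq_of_subset_of_card_le h (by omega)).symm
  obtain ⟨j, hjJ, hjI⟩ := not_subset.1 fun h => hJI (eq_of_subset_of_card_le h (by omega))
  refine ⟨i, j, ne_of_mem_of_not_mem hjJ hiJ |>.symm, le_antisymm ?_ ?_⟩
  · exact J.le_of_forall_card_eq_prod_le (fun L hL => hIJ ▸ hmax L (hL.trans hJs)) hjJ hiJ
  · exact I.le_of_forall_card_eq_prod_le (fun L hL => hmax L (hL.trans hIs)) hiI hjI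

end

theorem exists_injective_monoidHom_lex (A : Type*) [CommGroup A] [IsMulTorsionFree A]
    [Group.FG A] :
    ∃ (k : ℕ) (f : A →* Multiplicative (Lex (Fin k → ℤ))), Injective f := by
  have : Module.Finite ℤ (Additive A) := Module.Finite.iff_addGroup_fg.2 inferInstance
  obtain ⟨k, b⟩ := Module.basisOfFiniteTypeTorsionFree' (R := ℤ) (M := Additive A)
  exact ⟨k, AddMonoidHom.toMultiplicativeRight b.equivFun.toAddMonoidHom, b.equivFun.injective⟩

/-- Specialization of Fujimoto's lemma: if `x₁, …, x_{2n+2}` in a torsion-free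
abelian group have property `P_{2n+2, n+1}`, then two of them are equal. -/
theorem stmt_19 {G : Type*} [CommGroup G]
    (hG : ∀ g : G, ∀ k : ℕ, 1 ≤ k → g ^ k = 1 → g = 1)
    (n : ℕ) (x : Fin (2 * n + 2) → G)
    (hP : ∀ I : Finset (Fin (2 * n + 2)), I.card = n + 1 →
      ∃ J : Finset (Fin (2 * n + 2)), J ≠ I ∧ J.card = n + 1 ∧
        (∏ i ∈ I, x i) = ∏ j ∈ J, x j) :
    ∃ j₁ j₂ : Fin (2 * n + 2), j₁ ≠ j₂ ∧ x j₁ = x j₂ := by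
  have : IsMulTorsionFree G := .of_not_isOfFinOrder fun g hg hfin => by
    obtain ⟨k, hk, hgk⟩ := isOfFinOrder_iff_pow_eq_one.1 hfin
    exact hg (hG g k hk hgk)
  let S := Subgroup.closure (Set.range x)
  let x' (i : Fin (2 * n + 2)) : S := ⟨x i, Subgroup.subset_closure (Set.mem_range_self i)⟩
  obtain ⟨k, f, hf⟩ := exists_injective_monoidHom_lex S
  have hfx' : HasRepeatedSubsetProds (n + 1) (f ∘ x') :=
    (hasRepeatedSubsetProds_comp_iff hf).2
      ((hasRepeatedSubsetProds_comp_iff S.subtype_injective).1 hP)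
  obtain ⟨i, j, hij, hfij⟩ := hfx'.exists_ne_eq (by rw [Fintype.card_fin]; omega)
  exact ⟨i, j, hij, congrArg Subtype.val (hf hfij)⟩
end
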